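/- Let d ≥ 1 and let E = {E_i}_{i=1}^{d²} be an unbiased MIC (tr E_i = 1/d for all i) for d×d complex matrices with Gram matrix G. Then: (i) the matrix dG is doubly stochastic (its entries are nonnegative and every row and every column sums to 1); (ii) the maximal eigenvalue of G equals 1/d; and (iii) tr G ≤ 1. -/

import Mathlib

open Matrix BigOperators
open scoped ComplexOrder Kronecker

/-- A measure basis: a linearly independent family of `d²` Hermitian `d×d` complex
matrices summing to the identity, with nonnegative traces. -/
def IsMeasureBasis {d : ℕ} (L : Fin (d ^ 2) → Matrix (Fin d) (Fin d) ℂ) : Prop :=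
  (∀ i, (L i).IsHermitian) ∧ LinearIndependent ℝ L ∧ (∑ i, L i) = 1 ∧ ∀ i, 0 ≤ ((L i).trace).re

/-- A Wigner basis: an orthogonal measure basis. -/
def IsWignerBasis {d : ℕ} (L : Fin (d ^ 2) → Matrix (Fin d) (Fin d) ℂ) : Prop :=
  IsMeasureBasis L ∧ ∀ i j, i ≠ j → (L i * L j).trace = 0

/-- The rescaled frame operator `S_L(X) = ∑ⱼ (tr(X Lⱼ)/lⱼ) Lⱼ`. -/
noncomputable def rsFrameOp {n : Type*} [Fintype n] {m : Type*} [Fintype m] [DecidableEq m]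
    (L : n → Matrix m m ℂ) (X : Matrix m m ℂ) : Matrix m m ℂ :=
  ∑ j, (((X * L j).trace) / ((L j).trace)) • L j

/-- A map on matrices that is ℝ-linear, Hermiticity-preserving, self-adjoint with respect to
the Hilbert–Schmidt inner product on Hermitian matrices, and positive. -/
def IsPosSelfAdjMap {m : Type*} [Fintype m]
    (T : Matrix m m ℂ → Matrix m m ℂ) : Prop :=
  IsLinearMap ℝ T ∧ (∀ X, X.IsHermitian → (T X).IsHermitian) ∧
  (∀ X Y, X.IsHermitian → Y.IsHermitian → (T X * Y).trace = (X * T Y).trace) ∧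
  (∀ X, X.IsHermitian → 0 ≤ ((X * T X).trace).re)

/-- `T` is the (unique) positive self-adjoint inverse square root of the rescaled frame
operator of `L`, i.e. `S_L ∘ T ∘ T = id` on Hermitian matrices; `PW(L) i = T (L i)`. -/
def IsInvSqrtOfFrameOp {n : Type*} [Fintype n] {m : Type*} [Fintype m] [DecidableEq m]
    (L : n → Matrix m m ℂ) (T : Matrix m m ℂ → Matrix m m ℂ) : Prop :=
  IsPosSelfAdjMap T ∧ ∀ X : Matrix m m ℂ, X.IsHermitian → rsFrameOp L (T (T X)) = X

/-!
Since `tr (A B) ≥ 0` for positive semidefinite `A`, `B`, the Gram matrix is entrywise nonnegative,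
and `∑ⱼ Eⱼ = 1` turns its row sums into `tr Eᵢ = 1/d`. For a nonnegative symmetric matrix with
constant row sum `r`, the all-ones vector is an eigenvector for `r`, while Gershgorin's theorem
bounds every eigenvalue by `r`. Finally `Gᵢᵢ = tr Eᵢ² ≤ (tr Eᵢ)² = 1/d²`, summed over `d²` indices.
-/

namespace Matrix

variable {n 𝕜 : Type*} [Fintype n] [RCLike 𝕜]

open scoped MatrixOrder in
theorem PosSemidef.trace_mul_nonneg {A B : Matrix n n 𝕜} (hA : A.PosSemidef)
    (hB : B.PosSemidef) : 0 ≤ (A * B).trace := by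
  classical
  obtain ⟨S, rfl⟩ := CStarAlgebra.nonneg_iff_eq_star_mul_self.mp hB.nonneg
  rw [← mul_assoc, trace_mul_comm, ← mul_assoc]
  exact (hA.mul_mul_conjTranspose_same S).trace_nonneg

theorem IsHermitian.trace_mul_self [DecidableEq n] {A : Matrix n n 𝕜} (hA : A.IsHermitian) :
    (A * A).trace = ∑ i, ((hA.eigenvalues i ^ 2 : ℝ) : 𝕜) := by
  conv_lhs => rw [hA.spectral_theorem, ← map_mul, Unitary.conjStarAlgAut_apply, trace_mul_cycle,
    Unitary.coe_star_mul_self, one_mul, diagonal_mul_diagonal, trace_diagonal]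
  simp [sq]

theorem PosSemidef.trace_mul_self_le_sq {A : Matrix n n 𝕜} (hA : A.PosSemidef) :
    (A * A).trace ≤ A.trace ^ 2 := by
  classical
  rw [hA.isHermitian.trace_mul_self, hA.isHermitian.trace_eq_sum_eigenvalues]
  exact_mod_cast Finset.sum_sq_le_sq_sum_of_nonneg fun i _ => hA.eigenvalues_nonneg i

theorem sum_re_trace_mul_eq_of_sum_eq_one {ι : Type*} [Fintype ι] [DecidableEq n]
    {L : ι → Matrix n n 𝕜} (hL : ∑ j, L j = 1) (A : Matrix n n 𝕜) :
    ∑ j, RCLike.re (A * L j).trace = RCLike.re A.trace := by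
  rw [← map_sum, ← trace_sum, ← Finset.mul_sum, hL, mul_one]

theorem le_of_hasEigenvalue_of_nonneg_of_sum_row_eq {A : Matrix n n ℝ} [DecidableEq n] {r μ : ℝ}
    (hnonneg : ∀ i j, 0 ≤ A i j) (hr : ∀ i, ∑ j, A i j = r)
    (hμ : Module.End.HasEigenvalue (toLin' A) μ) : μ ≤ r := by
  obtain ⟨k, hk⟩ := eigenvalue_mem_ball hμ
  have hoff : ∑ j ∈ Finset.univ.erase k, ‖A k j‖ = r - A k k := by
    simp only [Real.norm_of_nonneg (hnonneg k _)]
    rw [Finset.sum_erase_eq_sub (Finset.mem_univ k), hr]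
  rw [Metric.mem_closedBall, Real.dist_eq, hoff] at hk
  linarith [le_abs_self (μ - A k k)]

theorem IsHermitian.sup'_eigenvalues_eq_of_nonneg_of_sum_row_eq [Nonempty n] [DecidableEq n]
    {A : Matrix n n ℝ} (hA : A.IsHermitian) {r : ℝ}
    (hnonneg : ∀ i j, 0 ≤ A i j) (hr : ∀ i, ∑ j, A i j = r) :
    Finset.univ.sup' Finset.univ_nonempty hA.eigenvalues = r := by
  have hspec : spectrum ℝ (toLin' A) = Set.range hA.eigenvalues := by
    rw [spectrum_toLin', hA.spectrum_real_eq_range_eigenvalues]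
  refine le_antisymm (Finset.sup'_le _ _ fun i _ => ?_) ?_
  · refine le_of_hasEigenvalue_of_nonneg_of_sum_row_eq hnonneg hr ?_
    exact Module.End.hasEigenvalue_iff_mem_spectrum.mpr (hspec ▸ Set.mem_range_self i)
  · have hone : Module.End.HasEigenvector (toLin' A) r 1 := by
      refine ⟨Module.End.mem_eigenspace_iff.mpr ?_, one_ne_zero⟩
      ext i
      simp [mulVec, dotProduct, hr]
    obtain ⟨i, hi⟩ : r ∈ Set.range hA.eigenvalues :=
      hspec ▸ (Module.End.hasEigenvalue_of_hasEigenvector hone).mem_spectrum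
    exact hi ▸ Finset.le_sup' _ (Finset.mem_univ i)

end Matrix

theorem unbiased_mic_gram_properties {d : ℕ} [NeZero d]
    (E : Fin (d ^ 2) → Matrix (Fin d) (Fin d) ℂ)
    (hE : IsMeasureBasis E) (hEpsd : ∀ i, (E i).PosSemidef)
    (hEunb : ∀ i, (E i).trace = ((d : ℂ))⁻¹)
    (G : Matrix (Fin (d ^ 2)) (Fin (d ^ 2)) ℝ)
    (hG : ∀ i j, G i j = ((E i * E j).trace).re)
    (hGh : G.IsHermitian) :
    (∀ i j, 0 ≤ (d : ℝ) * G i j) ∧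
    (∀ i, ∑ j, (d : ℝ) * G i j = 1) ∧
    (∀ j, ∑ i, (d : ℝ) * G i j = 1) ∧
    (Finset.univ.sup' Finset.univ_nonempty hGh.eigenvalues = (d : ℝ)⁻¹) ∧
    G.trace ≤ 1 := by
  obtain ⟨-, -, hsum, -⟩ := hE
  have hd : (0 : ℝ) < d := Nat.cast_pos.mpr (NeZero.pos d)
  have hnonneg (i j : Fin (d ^ 2)) : 0 ≤ G i j :=
    hG i j ▸ (Complex.nonneg_iff.mp ((hEpsd i).trace_mul_nonneg (hEpsd j))).1
  have hrow (i : Fin (d ^ 2)) : ∑ j, G i j = (d : ℝ)⁻¹ := by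
    simp_rw [hG]
    simpa [hEunb] using sum_re_trace_mul_eq_of_sum_eq_one hsum (E i)
  have hcol (j : Fin (d ^ 2)) : ∑ i, G i j = (d : ℝ)⁻¹ := by
    simpa [← hGh.apply j] using hrow j
  have hdiag (i : Fin (d ^ 2)) : G i i ≤ (d : ℝ)⁻¹ ^ 2 := by
    have h := (Complex.le_def.mp (hEpsd i).trace_mul_self_le_sq).1
    rwa [hEunb, ← hG, ← Complex.ofReal_natCast, ← Complex.ofReal_inv, ← Complex.ofReal_pow,
      Complex.ofReal_re] at h
  refine ⟨fun i j => mul_nonneg hd.le (hnonneg i j), fun i => ?_, fun j => ?_,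
    hGh.sup'_eigenvalues_eq_of_nonneg_of_sum_row_eq hnonneg hrow, ?_⟩
  · rw [← Finset.mul_sum, hrow, mul_inv_cancel₀ hd.ne']
  · rw [← Finset.mul_sum, hcol, mul_inv_cancel₀ hd.ne']
  · calc G.trace ≤ ∑ _i : Fin (d ^ 2), (d : ℝ)⁻¹ ^ 2 := Finset.sum_le_sum fun i _ => hdiag i
      _ = 1 := by simp [field]
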